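/- Let G be a connected undirected graph on [n] with n≥4, let P be an all-pairs set of paths for G, and let L be an integer with 2≤L≤√n. If x∈{1}×[n]^L is good and b1∈{0,1}, then Σ_{F∈X} r(g_{x,b1},F) ≥ (1/(2e))·L·n^{L+1}. -/

import Mathlib

open Finset

/-- An all-pairs set of simple paths in `G`, with `P^{u,u}` the trivial path. -/
structure PathSystem {n : ℕ} (G : SimpleGraph (Fin n)) where
  path : ∀ u v : Fin n, G.Walk u v
  isPath : ∀ u v : Fin n, (path u v).IsPath
  diag : ∀ u : Fin n, path u u = SimpleGraph.Walk.nil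

/-- Vertex congestion of a path system: max over vertices of total occurrences. -/
def PathSystem.congestion {n : ℕ} {G : SimpleGraph (Fin n)} (P : PathSystem G) : ℕ :=
  Finset.univ.sup fun w : Fin n =>
    ∑ u : Fin n, ∑ v : Fin n, (P.path u v).support.count w

/-- Support of the `i`-th quasi-segment `P^{x_i, x_{i+1}}` (0-based). -/
def segSupport {n L : ℕ} {G : SimpleGraph (Fin n)} (P : PathSystem G)
    (x : Fin (L + 1) → Fin n) (i : ℕ) : List (Fin n) :=
  (P.path (x ⟨min i L, by omega⟩) (x ⟨min (i + 1) L, by omega⟩)).support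

/-- Support of the staircase walk `P^{x_j,x_{j+1}} ∘ ⋯ ∘ P^{x_{L-1},x_L}` (0-based `j`). -/
def stairSupportFrom {n L : ℕ} {G : SimpleGraph (Fin n)} (P : PathSystem G)
    (x : Fin (L + 1) → Fin n) (j : ℕ) : List (Fin n) :=
  x ⟨min j L, by omega⟩ ::
    (List.ofFn fun k : Fin (L - j) =>
      (P.path (x ⟨j + k, by have := k.isLt; omega⟩)
              (x ⟨j + k + 1, by have := k.isLt; omega⟩)).support.tail).flatten

/-- `Tail(j, S_x)` (0-based `j`): the staircase from `x_j` with the first occurrence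
of `x_j` removed. -/
def tailSupport {n L : ℕ} {G : SimpleGraph (Fin n)} (P : PathSystem G)
    (x : Fin (L + 1) → Fin n) (j : ℕ) : List (Fin n) :=
  (stairSupportFrom P x j).erase (x ⟨min j L, by omega⟩)

/-- Largest 0-based index `i` such that the prefixes `x_0 … x_i` and `y_0 … y_i` agree
(`J_{x,y} - 1` in 1-based notation). -/
def J0 {n L : ℕ} (x y : Fin (L + 1) → Fin n) : ℕ :=
  (Finset.univ.filter fun i : Fin (L + 1) => ∀ k ≤ i, x k = y k).sup fun i => (i : ℕ)

/-- `q_v(u)`: the number of paths in `P` starting at `u` that contain `v`. -/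
def qcount {n : ℕ} {G : SimpleGraph (Fin n)} (P : PathSystem G) (v u : Fin n) : ℕ :=
  (Finset.univ.filter fun w : Fin n => v ∈ (P.path u w).support).card

/-- Largest 0-based index `i` with `v ∈ P^{x_i,x_{i+1}}`. -/
def maxSegIdx {n L : ℕ} {G : SimpleGraph (Fin n)} (P : PathSystem G)
    (x : Fin (L + 1) → Fin n) (v : Fin n) : ℕ :=
  ((Finset.range L).filter fun i => v ∈ segSupport P x i).sup id

/-- The function `f_x`. -/
noncomputable def fS {n L : ℕ} {G : SimpleGraph (Fin n)} (P : PathSystem G)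
    (x : Fin (L + 1) → Fin n) (v : Fin n) : ℤ :=
  if v ∈ stairSupportFrom P x 0 then
    -(((maxSegIdx P x v : ℤ) + 1) * n) - (((segSupport P x (maxSegIdx P x v)).idxOf v : ℤ) + 1)
  else (G.dist v (x 0) : ℤ)

/-- The function `g_{x,b}`. -/
noncomputable def gS {n L : ℕ} {G : SimpleGraph (Fin n)} (P : PathSystem G)
    (x : Fin (L + 1) → Fin n) (b : ℤ) (v : Fin n) : ℤ × ℤ :=
  if v = x (Fin.last L) then (fS P x v, b) else (fS P x v, -1)

/-- The relation `r*`. -/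
noncomputable def rstar {n L : ℕ} (x y : Fin (L + 1) → Fin n) (b1 b2 : ℤ) : ℝ :=
  if b1 = b2 ∨ ¬ Function.Injective x ∨ ¬ Function.Injective y then 0
  else (n : ℝ) ^ (J0 x y + 1)

/-- The relation `r`. -/
noncomputable def rrel {n L : ℕ} (x y : Fin (L + 1) → Fin n) (b1 b2 : ℤ) : ℝ :=
  if x = y then 0 else rstar x y b1 b2

/-- The relation `r'`. -/
noncomputable def rprime {n L : ℕ} {G : SimpleGraph (Fin n)} (P : PathSystem G) (g : ℕ)
    (x y : Fin (L + 1) → Fin n) (b1 b2 : ℤ) (v : Fin n) : ℝ :=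
  if gS P x b1 v = gS P y b2 v ∨ b1 = b2 then 0
  else if v ∈ tailSupport P x (J0 x y) ∧ v ∉ tailSupport P y (J0 x y) then
    rrel x y b1 b2 * g / (n : ℝ) ^ (1.5 : ℝ)
  else if v ∈ tailSupport P y (J0 x y) ∧ v ∉ tailSupport P x (J0 x y) then
    rrel x y b1 b2 * (n : ℝ) ^ (1.5 : ℝ) / g
  else rrel x y b1 b2

/-- The vertex congestion of the graph `G`. -/
noncomputable def vertexCongestion {n : ℕ} (G : SimpleGraph (Fin n)) : ℕ :=
  sInf {c | ∃ P : PathSystem G, P.congestion = c}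

/-- The number of cut edges `|E(S, V∖S)|`. -/
def cutEdges {n : ℕ} (G : SimpleGraph (Fin n)) [DecidableRel G.Adj]
    (S : Finset (Fin n)) : ℕ :=
  ((S ×ˢ Sᶜ).filter fun p => G.Adj p.1 p.2).card



/-!
Group the good `y ≠ x` with `y 0 = x 0` by the first index `j ∈ [1, L]` (0-based) at which `y`
differs from `x`. For such `y` and the unique `b2 ≠ b1`, `r(g_{x,b1}, g_{y,b2}) ≥ n ^ j`, and the
class has `(n-j-1) · (n-j-1)(n-j-2)⋯(n-L)` elements. For `j < L` this is at least
`(n - L) ^ (L+1-j) ≥ (n (1 - 1/L)) ^ (L+1-j)` because `L² ≤ n`, so the class contributes at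
least `n ^ (L+1) (1 - 1/L) ^ L ≥ n ^ (L+1) / (2e)`; for `j = L` it contributes
`n ^ L (n-L-1) ≥ n ^ (L+1) / 4`. Summing over the `L` classes gives the bound.
-/

open Function Real

section InjExtensions

variable {α β : Type*} [Fintype α] [DecidableEq α] [Fintype β] [DecidableEq β]

def injExtensions (x : α → β) (S : Finset α) : Finset (α → β) :=
  {y | Injective y ∧ ∀ a ∈ S, y a = x a}

lemma injExtensions_anti {x : α → β} {S S' : Finset α} (h : S ⊆ S') :
    injExtensions x S' ⊆ injExtensions x S := by
  intro y hy
  simp only [injExtensions, mem_filter, mem_univ, true_and] at hy ⊢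
  exact ⟨hy.1, fun a ha => hy.2 a (h ha)⟩

lemma self_mem_injExtensions {x : α → β} (hx : Injective x) (S : Finset α) :
    x ∈ injExtensions x S := by
  simp [injExtensions, hx]

lemma card_injective_avoiding (T : Finset β) :
    #{f : α → β | Injective f ∧ ∀ a, f a ∉ T} =
      (Fintype.card β - #T).descFactorial (Fintype.card α) := by
  have e : {f : α → β // Injective f ∧ ∀ a, f a ∉ T} ≃ (α ↪ {b // b ∉ T}) :=
    { toFun := fun f => ⟨fun a => ⟨f.1 a, f.2.2 a⟩, fun a b h => f.2.1 (congrArg Subtype.val h)⟩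
      invFun := fun g => ⟨fun a => g a, fun a b h => g.injective (Subtype.ext h), fun a => (g a).2⟩
      left_inv := fun f => rfl
      right_inv := fun g => rfl }
  rw [← Fintype.card_subtype, Fintype.card_congr e, Fintype.card_embedding_eq,
    Fintype.card_subtype_compl, Fintype.card_coe]

/-- An injective extension of `x|S` is determined by its restriction to `Sᶜ`, which is an
injective map avoiding `x '' S`. -/
lemma card_injExtensions {x : α → β} {S : Finset α} (hx : Set.InjOn x S) :
    #(injExtensions x S) = (Fintype.card β - #S).descFactorial (Fintype.card α - #S) := by
  have hcompl : Fintype.card α - #S = Fintype.card {a // a ∉ S} := by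
    rw [Fintype.card_subtype_compl, Fintype.card_coe]
  rw [hcompl, ← card_image_of_injOn hx, ← card_injective_avoiding]
  refine card_nbij' (fun y a => y a) (fun f a => if h : a ∈ S then x a else f ⟨a, h⟩)
    ?_ ?_ ?_ ?_
  · intro y hy
    simp only [injExtensions, mem_coe, mem_filter, mem_univ, true_and] at hy ⊢
    refine ⟨fun a b h => Subtype.ext (hy.1 h), fun a ha => ?_⟩
    obtain ⟨b, hb, hba⟩ := mem_image.1 ha
    exact a.2 (hy.1 ((hy.2 b hb).trans hba) ▸ hb)
  · intro f hf
    simp only [injExtensions, mem_coe, mem_filter, mem_univ, true_and] at hf ⊢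
    refine ⟨fun a b h => ?_, fun a ha => dif_pos ha⟩
    by_cases ha : a ∈ S <;> by_cases hb : b ∈ S <;> simp only [ha, hb, dif_pos, dif_neg,
      not_false_eq_true] at h
    · exact hx ha hb h
    · exact absurd (mem_image_of_mem x ha) (h ▸ hf.2 _)
    · exact absurd (mem_image_of_mem x hb) (h ▸ hf.2 _)
    · exact congrArg Subtype.val (hf.1 h)
  · intro y hy
    simp only [injExtensions, mem_coe, mem_filter, mem_univ, true_and] at hy
    funext a
    by_cases ha : a ∈ S
    · simp [ha, hy.2 a ha]
    · simp [ha]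
  · intro f _
    funext a
    simp [a.2]

lemma card_injExtensions_sdiff_insert {x : α → β} (hx : Injective x) {S : Finset α} {a : α}
    (ha : a ∉ S) :
    #(injExtensions x S \ injExtensions x (insert a S)) =
      (Fintype.card β - #S - 1) *
        (Fintype.card β - #S - 1).descFactorial (Fintype.card α - #S - 1) := by
  have hSα : #S < Fintype.card α := card_lt_univ_of_notMem ha
  have hαβ : Fintype.card α ≤ Fintype.card β := Fintype.card_le_of_injective x hx
  rw [card_sdiff_of_subset (injExtensions_anti (subset_insert a S)),
    card_injExtensions hx.injOn, card_injExtensions hx.injOn, card_insert_of_notMem ha,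
    ← Nat.sub_sub, ← Nat.sub_sub]
  obtain ⟨m, hm⟩ : ∃ m, Fintype.card β - #S = m + 1 := ⟨Fintype.card β - #S - 1, by omega⟩
  obtain ⟨k, hk⟩ : ∃ k, Fintype.card α - #S = k + 1 := ⟨Fintype.card α - #S - 1, by omega⟩
  rw [hm, hk, Nat.succ_descFactorial_succ, Nat.add_sub_cancel, Nat.add_sub_cancel, Nat.succ_mul,
    Nat.add_sub_cancel]

end InjExtensions

section FirstDifference

variable {α β : Type*} [Fintype α] [DecidableEq α] [LinearOrder α] [LocallyFiniteOrderBot α]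
  [Fintype β] [DecidableEq β]

def firstDiffClass (x : α → β) (j : α) : Finset (α → β) :=
  injExtensions x (Iio j) \ injExtensions x (Iic j)

lemma card_firstDiffClass {x : α → β} (hx : Injective x) (j : α) :
    #(firstDiffClass x j) =
      (Fintype.card β - #(Iio j) - 1) *
        (Fintype.card β - #(Iio j) - 1).descFactorial (Fintype.card α - #(Iio j) - 1) := by
  rw [firstDiffClass, ← Iio_insert]
  exact card_injExtensions_sdiff_insert hx notMem_Iio_self

lemma disjoint_firstDiffClass {x : α → β} {i j : α} (hij : i < j) :
    Disjoint (firstDiffClass x i) (firstDiffClass x j) := by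
  rw [firstDiffClass, firstDiffClass, disjoint_left]
  intro y hi hj
  have hsub : Iic i ⊆ Iio j := fun k hk => mem_Iio.2 ((mem_Iic.1 hk).trans_lt hij)
  exact (mem_sdiff.1 hi).2 (injExtensions_anti hsub (mem_sdiff.1 hj).1)

end FirstDifference

lemma le_J0_add_one {n L : ℕ} {x y : Fin (L + 1) → Fin n} {j : Fin (L + 1)}
    (h : ∀ k < j, x k = y k) : (j : ℕ) ≤ J0 x y + 1 := by
  obtain hj | hj := Nat.eq_zero_or_pos j
  · omega
  let i : Fin (L + 1) := ⟨j - 1, by omega⟩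
  have hival : (i : ℕ) = j - 1 := rfl
  have hi : i ∈ univ.filter fun i : Fin (L + 1) => ∀ k ≤ i, x k = y k :=
    mem_filter.2 ⟨mem_univ i, fun k hk => h k (Fin.lt_def.2 (by rw [Fin.le_def] at hk; omega))⟩
  have := le_sup (f := fun i : Fin (L + 1) => (i : ℕ)) hi
  rw [J0]
  omega

lemma rrel_nonneg {n L : ℕ} (x y : Fin (L + 1) → Fin n) (b1 b2 : ℤ) : 0 ≤ rrel x y b1 b2 := by
  unfold rrel rstar
  split_ifs <;> positivity

lemma sum_rrel_pair {n L : ℕ} {x y : Fin (L + 1) → Fin n} (hx : Injective x)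
    (hy : Injective y) (hxy : x ≠ y) {b1 : ℤ} (hb1 : b1 = 0 ∨ b1 = 1) :
    ∑ b2 ∈ ({0, 1} : Finset ℤ), rrel x y b1 b2 = (n : ℝ) ^ (J0 x y + 1) := by
  rcases hb1 with rfl | rfl <;> simp [rrel, rstar, hx, hy, hxy]

lemma one_div_two_exp_le_one_sub_inv_pow {L : ℕ} (hL : 2 ≤ L) :
    1 / (2 * exp 1) ≤ (1 - 1 / (L : ℝ)) ^ L := by
  obtain ⟨m, rfl⟩ : ∃ m, L = m + 1 := ⟨L - 1, by omega⟩
  have hm : (1 : ℝ) ≤ m := by exact_mod_cast (by omega : 1 ≤ m)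
  have hbase : 1 + (m : ℝ)⁻¹ ≤ 2 := by linarith [inv_le_one_of_one_le₀ hm]
  have hpow : (1 + (m : ℝ)⁻¹) ^ (m + 1) ≤ 2 * exp 1 := by
    rw [pow_succ, mul_comm 2]
    exact mul_le_mul one_add_inv_pow_le_exp hbase (by positivity) (exp_pos 1).le
  have hinv : 1 - 1 / ((m + 1 : ℕ) : ℝ) = (1 + (m : ℝ)⁻¹)⁻¹ := by
    push_cast
    field_simp
    ring
  rw [hinv, inv_pow, inv_eq_one_div]
  exact one_div_le_one_div_of_le (by positivity) hpow

lemma pow_mul_card_firstDiff_ge {n L s : ℕ} (hL : 2 ≤ L) (hLn : L * L ≤ n) (hs : 1 ≤ s)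
    (hsL : s ≤ L) :
    (n : ℝ) ^ (L + 1) / (2 * exp 1) ≤
      (n : ℝ) ^ s * (((n - s - 1) * (n - s - 1).descFactorial (L - s) : ℕ) : ℝ) := by
  have hLL : 2 * L ≤ n := (Nat.mul_le_mul_right L hL).trans hLn
  have hexp : 2 ≤ exp 1 := by linarith [add_one_le_exp (1 : ℝ)]
  rcases hsL.lt_or_eq with hsL | rfl
  · have hcount : (n - L) ^ (L + 1 - s) ≤ (n - s - 1) * (n - s - 1).descFactorial (L - s) := by
      have h := Nat.pow_sub_le_descFactorial (n - s - 1) (L - s)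
      rw [show n - s - 1 + 1 - (L - s) = n - L by omega] at h
      rw [show L + 1 - s = L - s + 1 by omega, pow_succ']
      exact Nat.mul_le_mul (by omega) h
    have hL0 : (0 : ℝ) < L := by exact_mod_cast (by omega : 0 < L)
    have hq0 : (0 : ℝ) ≤ 1 - 1 / L := by
      rw [sub_nonneg, div_le_one hL0]; exact_mod_cast (by omega : 1 ≤ L)
    have hq1 : 1 - 1 / (L : ℝ) ≤ 1 := sub_le_self _ (by positivity)
    have hnL : (n : ℝ) * (1 - 1 / L) ≤ ((n - L : ℕ) : ℝ) := by
      have hLn' : (L : ℝ) * L ≤ n := by exact_mod_cast hLn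
      rw [Nat.cast_sub (by omega), mul_sub, mul_one, mul_one_div]
      have : (L : ℝ) ≤ n / L := by rw [le_div_iff₀ hL0]; exact hLn'
      linarith
    calc (n : ℝ) ^ (L + 1) / (2 * exp 1)
        ≤ (n : ℝ) ^ (L + 1) * (1 - 1 / L) ^ L := by
          rw [div_eq_mul_one_div]
          gcongr
          exact one_div_two_exp_le_one_sub_inv_pow hL
      _ ≤ (n : ℝ) ^ (L + 1) * (1 - 1 / L) ^ (L + 1 - s) := by
          gcongr ?_ * ?_
          exact pow_le_pow_of_le_one hq0 hq1 (by omega)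
      _ = (n : ℝ) ^ s * ((n : ℝ) * (1 - 1 / L)) ^ (L + 1 - s) := by
          rw [mul_pow, ← mul_assoc, ← pow_add, Nat.add_sub_cancel' (by omega)]
      _ ≤ (n : ℝ) ^ s * ((n - L : ℕ) : ℝ) ^ (L + 1 - s) := by gcongr
      _ ≤ (n : ℝ) ^ s * (((n - s - 1) * (n - s - 1).descFactorial (L - s) : ℕ) : ℝ) := by
          gcongr
          exact_mod_cast hcount
  · -- `n - s - 1 ≥ n / 4` because `s ≤ n / 2` and `n ≥ 4`.
    have hquarter : (n : ℝ) / 4 ≤ ((n - s - 1 : ℕ) : ℝ) := by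
      rw [div_le_iff₀ (by norm_num)]
      exact_mod_cast (by
        have : 4 ≤ n := (Nat.mul_le_mul hL hL).trans hLn
        omega : n ≤ (n - s - 1) * 4)
    rw [Nat.sub_self, Nat.descFactorial_zero, mul_one, pow_succ, mul_div_assoc]
    gcongr
    calc (n : ℝ) / (2 * exp 1) ≤ n / 4 := by gcongr; linarith
      _ ≤ _ := hquarter

lemma pow_le_sum_rrel_of_mem_firstDiffClass {n L : ℕ} {x y : Fin (L + 1) → Fin n}
    (hx : Injective x) {j : Fin (L + 1)} (hy : y ∈ firstDiffClass x j) {b1 : ℤ}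
    (hb1 : b1 = 0 ∨ b1 = 1) :
    (n : ℝ) ^ (j : ℕ) ≤ ∑ b2 ∈ ({0, 1} : Finset ℤ), rrel x y b1 b2 := by
  obtain ⟨hyj, hyj'⟩ := mem_sdiff.1 hy
  simp only [injExtensions, mem_filter, mem_univ, true_and] at hyj
  have hxy : x ≠ y := by
    rintro rfl
    exact hyj' (self_mem_injExtensions hx _)
  rw [sum_rrel_pair hx hyj.1 hxy hb1]
  have hn : (1 : ℝ) ≤ n := by
    exact_mod_cast (Fin.pos_iff_nonempty.2 ⟨x 0⟩ : 0 < n)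
  exact pow_le_pow_right₀ hn
    (le_J0_add_one fun k hk => (hyj.2 k (mem_Iio.2 hk)).symm)

theorem stmt4 {n L : ℕ} (hn : 4 ≤ n) (hL2 : 2 ≤ L) (hLn : (L : ℝ) ≤ Real.sqrt n)
    (x : Fin (L + 1) → Fin n) (hx1 : x 0 = ⟨0, by omega⟩)
    (hxgood : Function.Injective x)
    (b1 : ℤ) (hb1 : b1 = 0 ∨ b1 = 1) :
    (1 / (2 * Real.exp 1)) * (L : ℝ) * (n : ℝ) ^ (L + 1)
      ≤ ∑ y ∈ Finset.univ.filter (fun y : Fin (L + 1) → Fin n => y 0 = (⟨0, by omega⟩ : Fin n)),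
          ∑ b2 ∈ ({0, 1} : Finset ℤ), rrel x y b1 b2 := by
  have hLL : L * L ≤ n := by
    have h := (Real.le_sqrt (by positivity) (by positivity)).1 hLn
    rw [sq] at h
    exact_mod_cast h
  set F := fun y => ∑ b2 ∈ ({0, 1} : Finset ℤ), rrel x y b1 b2
  set C := fun i : Fin L => firstDiffClass x i.succ
  have hdisj : ((univ : Finset (Fin L)) : Set (Fin L)).PairwiseDisjoint C := by
    intro i _ j _ hij
    rcases hij.lt_or_gt with h | h
    exacts [disjoint_firstDiffClass (Fin.succ_lt_succ_iff.2 h),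
      (disjoint_firstDiffClass (Fin.succ_lt_succ_iff.2 h)).symm]
  have hsub : univ.biUnion C ⊆ univ.filter fun y => y 0 = (⟨0, by omega⟩ : Fin n) := by
    intro y hy
    obtain ⟨i, -, hyi⟩ := mem_biUnion.1 hy
    have hyi := (mem_sdiff.1 hyi).1
    simp only [injExtensions, mem_filter, mem_univ, true_and] at hyi ⊢
    rw [hyi.2 0 (mem_Iio.2 (Fin.succ_pos i)), hx1]
  calc (1 / (2 * Real.exp 1)) * (L : ℝ) * (n : ℝ) ^ (L + 1)
      = ∑ _i : Fin L, (n : ℝ) ^ (L + 1) / (2 * Real.exp 1) := by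
        rw [sum_const, card_univ, Fintype.card_fin, nsmul_eq_mul]
        ring
    _ ≤ ∑ i : Fin L, ∑ y ∈ C i, (n : ℝ) ^ ((i : ℕ) + 1) := by
        gcongr with i
        rw [sum_const, nsmul_eq_mul, mul_comm (#(C i) : ℝ), card_firstDiffClass hxgood,
          Fin.card_Iio, Fintype.card_fin, Fintype.card_fin, Fin.val_succ, Nat.add_sub_add_right]
        exact pow_mul_card_firstDiff_ge hL2 hLL (Nat.le_add_left 1 i) i.isLt
    _ ≤ ∑ i : Fin L, ∑ y ∈ C i, F y := by
        gcongr with i _ y hy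
        exact pow_le_sum_rrel_of_mem_firstDiffClass hxgood hy hb1
    _ = ∑ y ∈ univ.biUnion C, F y := (sum_biUnion hdisj).symm
    _ ≤ _ := sum_le_sum_of_subset_of_nonneg hsub fun y _ _ =>
        sum_nonneg fun b2 _ => rrel_nonneg x y b1 b2
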